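/- Let n ≥ 2, g ≥ 2, let B = V × V^c be a block in [n] × [n], and let M₁, …, M_{2g} ∈ SO(2n+1) be matrices each of the following form: the (2n+1)-st row and column equal (0, …, 0, 1), and for all 1 ≤ i, j ≤ n the (i,j)-th 2×2 block is of the form [[x, −y],[y, x]] if (i,j) ∉ B ∪ B̄, and of the form [[w, z],[z, −w]] if (i,j) ∈ B ∪ B̄ (x, y, w, z real, depending on i, j and the matrix). Then the product of commutators ∏_{l=1}^{g} [M_{2l−1}, M_{2l}] is not a generic element of T. -/

import Mathlib

open Matrix Real

/-- Index `2i` (0-based; row `2i-1` in 1-based numbering) in `Fin (2n+1)`. -/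
def ia {n : ℕ} (i : Fin n) : Fin (2*n+1) := ⟨2*i.val, by have := i.isLt; omega⟩

/-- Index `2i+1` (0-based; row `2i` in 1-based numbering) in `Fin (2n+1)`. -/
def ib {n : ℕ} (i : Fin n) : Fin (2*n+1) := ⟨2*i.val+1, by have := i.isLt; omega⟩

/-- The last index `2n` in `Fin (2n+1)`. -/
def ilast (n : ℕ) : Fin (2*n+1) := ⟨2*n, by omega⟩

/-- Membership in SO(2n+1). -/
def SOodd (n : ℕ) (M : Matrix (Fin (2*n+1)) (Fin (2*n+1)) ℝ) : Prop :=
  M * Mᵀ = 1 ∧ M.det = 1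

/-- The block-diagonal torus element `diag(R(θ₁), …, R(θₙ), 1)` of SO(2n+1). -/
noncomputable def torusMat (n : ℕ) (θ : Fin n → ℝ) :
    Matrix (Fin (2*n+1)) (Fin (2*n+1)) ℝ :=
  Matrix.of fun r c =>
    if hr : r.val < 2*n then
      if c.val < 2*n then
        if r.val / 2 = c.val / 2 then
          if r.val % 2 = 0 then
            if c.val % 2 = 0 then Real.cos (θ ⟨r.val/2, by omega⟩)
            else -Real.sin (θ ⟨r.val/2, by omega⟩)
          else
            if c.val % 2 = 0 then Real.sin (θ ⟨r.val/2, by omega⟩)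
            else Real.cos (θ ⟨r.val/2, by omega⟩)
        else 0
      else 0
    else if c.val < 2*n then 0 else 1

/-- `(θ₁, …, θₙ)` is a generic torus element: its centralizer in SO(2n+1) is exactly
the torus, and the only `λ ∈ {-1,0,1}ⁿ` with `λ·θ ∈ 2πℤ` is `λ = 0`. -/
noncomputable def IsGeneric (n : ℕ) (θ : Fin n → ℝ) : Prop :=
  (∀ M, SOodd n M → M * torusMat n θ = torusMat n θ * M →
      ∃ φ : Fin n → ℝ, M = torusMat n φ) ∧
  (∀ lam : Fin n → ℤ, (∀ i, lam i = -1 ∨ lam i = 0 ∨ lam i = 1) →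
      (∃ k : ℤ, ∑ i, (lam i : ℝ) * θ i = 2 * Real.pi * k) → ∀ i, lam i = 0)

/-- Commutator of matrices: `[P,Q] = P Q P⁻¹ Q⁻¹`. -/
noncomputable def commMat (n : ℕ) (P Q : Matrix (Fin (2*n+1)) (Fin (2*n+1)) ℝ) :
    Matrix (Fin (2*n+1)) (Fin (2*n+1)) ℝ :=
  P * Q * P⁻¹ * Q⁻¹

/-!
Let `K` be the diagonal sign matrix that reverses the orientation of the planes `i ∉ V`.
Conjugation by `K` turns the block pattern of each `M_l` into the pattern of a complex
`n × n` matrix `A_l` written over ℝ, and orthogonality of `M_l` makes `A_l` unitary, so the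
product of commutators becomes the realification of a complex matrix of determinant `1`.
The same conjugation turns the torus element `(θ₁, …, θₙ)` into the realification of
`diag(exp(± i θ_j))`, with sign `+` exactly for `j ∈ V`. Comparing complex determinants gives
`∑ ±θ_j ∈ 2πℤ`, which genericity forbids.
-/

def rowEquiv (n : ℕ) : (Fin n × Fin 2) ⊕ Unit ≃ Fin (2*n+1) where
  toFun
    | .inl (i, a) => ⟨2 * i + a, by omega⟩
    | .inr _ => ilast n
  invFun r := if h : r.val < 2 * n then .inl (⟨r / 2, by omega⟩, ⟨r % 2, by omega⟩) else .inr ()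
  left_inv
    | .inl (i, a) => by
      simp only [dif_pos (show 2 * i.val + a < 2 * n by omega)]
      congr <;> omega
    | .inr _ => by simp [ilast]
  right_inv r := by
    by_cases h : r.val < 2 * n
    · simp only [dif_pos h]; ext; simp only; omega
    · simp only [dif_neg h]; ext; simp only [ilast]; omega

@[simp] lemma rowEquiv_inl_zero {n : ℕ} (i : Fin n) : rowEquiv n (.inl (i, 0)) = ia i := rfl

@[simp] lemma rowEquiv_inl_one {n : ℕ} (i : Fin n) : rowEquiv n (.inl (i, 1)) = ib i := rfl

@[simp] lemma rowEquiv_inr {n : ℕ} (u : Unit) : rowEquiv n (.inr u) = ilast n := rfl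

lemma rowEquiv_inl_ne_ilast {n : ℕ} (p : Fin n × Fin 2) : rowEquiv n (.inl p) ≠ ilast n :=
  fun h => by have := congrArg Fin.val h; simp [rowEquiv, ilast] at this; omega

lemma ext_rowEquiv {n : ℕ} {R : Type*} {N N' : Matrix (Fin (2*n+1)) (Fin (2*n+1)) R}
    (h : ∀ x y, N (rowEquiv n x) (rowEquiv n y) = N' (rowEquiv n x) (rowEquiv n y)) :
    N = N' := by
  ext r c
  simpa using h ((rowEquiv n).symm r) ((rowEquiv n).symm c)

lemma leftMulMatrix_basisOneI_conj (z : ℂ) :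
    Algebra.leftMulMatrix Complex.basisOneI (starRingEnd ℂ z) =
      (Algebra.leftMulMatrix Complex.basisOneI z)ᵀ := by
  rw [Algebra.leftMulMatrix_complex, Algebra.leftMulMatrix_complex]
  ext a b
  fin_cases a <;> fin_cases b <;> simp

def conjInvolution {M : Type*} [Monoid M] (k : M) (hk : k * k = 1) : M →* M where
  toFun x := k * x * k
  map_one' := by rw [mul_one, hk]
  map_mul' x y := by simp only [← mul_assoc]; rw [mul_assoc (k * x) k k, hk, mul_one]

lemma conjInvolution_injective {M : Type*} [Monoid M] (k : M) (hk : k * k = 1) :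
    Function.Injective (conjInvolution k hk) :=
  Function.LeftInverse.injective (g := conjInvolution k hk) fun x => by
    simp only [conjInvolution, MonoidHom.coe_mk, OneHom.coe_mk, ← mul_assoc, hk, one_mul]
    rw [mul_assoc, hk, mul_one]

lemma det_mul_mul_mul_eq_one {ι R : Type*} [Fintype ι] [DecidableEq ι] [CommRing R]
    {A A' B B' : Matrix ι ι R} (hA : A * A' = 1) (hB : B * B' = 1) :
    (A * B * A' * B').det = 1 := by
  have hA' := congrArg det hA
  have hB' := congrArg det hB
  simp only [det_mul, det_one] at hA' hB' ⊢
  linear_combination (B.det * B'.det) * hA' + hB'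

section Realify

variable (ι : Type*) [Fintype ι] [DecidableEq ι]

noncomputable def realify : Matrix ι ι ℂ →+* Matrix (ι × Fin 2) (ι × Fin 2) ℝ :=
  (compRingEquiv ι (Fin 2) ℝ).toRingHom.comp
    (Algebra.leftMulMatrix Complex.basisOneI).toRingHom.mapMatrix

def extendByOne (R : Type*) [Semiring R] : Matrix ι ι R →* Matrix (ι ⊕ Unit) (ι ⊕ Unit) R where
  toFun X := fromBlocks X 0 0 1
  map_one' := fromBlocks_one
  map_mul' X Y := by simp [fromBlocks_multiply]

variable {ι}

lemma realify_apply (A : Matrix ι ι ℂ) (i j : ι) (a b : Fin 2) :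
    realify ι A (i, a) (j, b) = Algebra.leftMulMatrix Complex.basisOneI (A i j) a b := rfl

lemma realify_injective : Function.Injective (realify ι) :=
  (compRingEquiv ι (Fin 2) ℝ).injective.comp
    (Matrix.map_injective (f := Algebra.leftMulMatrix Complex.basisOneI)
      (Algebra.leftMulMatrix_injective _))

lemma realify_conjTranspose (A : Matrix ι ι ℂ) : realify ι Aᴴ = (realify ι A)ᵀ := by
  ext ⟨i, a⟩ ⟨j, b⟩
  simp [realify_apply, leftMulMatrix_basisOneI_conj]

variable {R : Type*} [Semiring R] (X : Matrix ι ι R)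

@[simp] lemma extendByOne_inl_inl (x y : ι) : extendByOne ι R X (.inl x) (.inl y) = X x y := rfl

@[simp] lemma extendByOne_inl_inr (x : ι) (u : Unit) : extendByOne ι R X (.inl x) (.inr u) = 0 :=
  rfl

@[simp] lemma extendByOne_inr_inl (x : ι) (u : Unit) : extendByOne ι R X (.inr u) (.inl x) = 0 :=
  rfl

@[simp] lemma extendByOne_inr_inr (u v : Unit) : extendByOne ι R X (.inr u) (.inr v) = 1 := by
  simp [extendByOne]

lemma extendByOne_injective : Function.Injective (extendByOne ι R) :=
  fun _ _ h => (fromBlocks_inj.mp h).1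

lemma extendByOne_transpose : extendByOne ι R Xᵀ = (extendByOne ι R X)ᵀ := by
  simp [extendByOne, fromBlocks_transpose]

end Realify

section Twist

variable {ι : Type*} [DecidableEq ι] (V : Finset ι)

def vSign (i : ι) : ℤ := if i ∈ V then 1 else -1

lemma vSign_eq_neg_one_or_one (i : ι) : vSign V i = -1 ∨ vSign V i = 1 := by
  unfold vSign; split_ifs <;> simp

lemma vSign_ne_zero (i : ι) : vSign V i ≠ 0 := by
  rcases vSign_eq_neg_one_or_one V i with h | h <;> simp [h]

lemma vSign_mul_self (i : ι) : vSign V i * vSign V i = 1 := by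
  rcases vSign_eq_neg_one_or_one V i with h | h <;> simp [h]

lemma vSign_mul_vSign [Fintype ι] (i j : ι) :
    vSign V i * vSign V j = if (i, j) ∈ V ×ˢ Vᶜ ∪ (V ×ˢ Vᶜ).image Prod.swap then -1 else 1 := by
  by_cases hi : i ∈ V <;> by_cases hj : j ∈ V <;> simp [vSign, hi, hj]

/-- The diagonal of `K`, in the coordinates given by `rowEquiv`. -/
noncomputable def twist : (ι × Fin 2) ⊕ Unit → ℝ :=
  Sum.elim (fun p => if p.2 = 0 then 1 else vSign V p.1) 1

lemma twist_mul_self (x : (ι × Fin 2) ⊕ Unit) : twist V x * twist V x = 1 := by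
  rcases x with ⟨i, a⟩ | u
  · simp only [twist, Sum.elim_inl]
    split_ifs
    · norm_num
    · exact_mod_cast vSign_mul_self V i
  · simp [twist]

lemma diagonal_twist_mul_self [Fintype ι] :
    diagonal (twist V) * diagonal (twist V) = 1 := by
  rw [diagonal_mul_diagonal, funext (twist_mul_self V), diagonal_one]

lemma twist_mul_leftMulMatrix_exp_mul_twist (i : ι) (φ : ℝ) (a b : Fin 2) :
    twist V (.inl (i, a)) * Algebra.leftMulMatrix Complex.basisOneI
        (Complex.exp (↑((vSign V i : ℝ) * φ) * Complex.I)) a b * twist V (.inl (i, b)) =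
      Algebra.leftMulMatrix Complex.basisOneI (Complex.exp (φ * Complex.I)) a b := by
  simp only [Algebra.leftMulMatrix_complex, Complex.exp_ofReal_mul_I_re,
    Complex.exp_ofReal_mul_I_im]
  by_cases hi : i ∈ V <;> fin_cases a <;> fin_cases b <;> simp [twist, vSign, hi]

end Twist

section TwistedEmbedding

variable {n : ℕ} (V : Finset (Fin n))

noncomputable def twistedEmbedding :
    Matrix (Fin n) (Fin n) ℂ →* Matrix (Fin (2*n+1)) (Fin (2*n+1)) ℝ :=
  (reindexAlgEquiv ℝ ℝ (rowEquiv n)).toMonoidHom.comp <|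
    (conjInvolution _ (diagonal_twist_mul_self V)).comp <|
      (extendByOne _ ℝ).comp (realify (Fin n)).toMonoidHom

lemma twistedEmbedding_injective : Function.Injective (twistedEmbedding V) :=
  (reindexAlgEquiv ℝ ℝ (rowEquiv n)).injective.comp <|
    (conjInvolution_injective _ (diagonal_twist_mul_self V)).comp <|
      extendByOne_injective.comp realify_injective

lemma twistedEmbedding_rowEquiv_apply (A : Matrix (Fin n) (Fin n) ℂ)
    (x y : (Fin n × Fin 2) ⊕ Unit) :
    twistedEmbedding V A (rowEquiv n x) (rowEquiv n y) =
      twist V x * extendByOne _ ℝ (realify (Fin n) A) x y * twist V y := by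
  simp [twistedEmbedding, conjInvolution]

lemma twistedEmbedding_conjTranspose (A : Matrix (Fin n) (Fin n) ℂ) :
    twistedEmbedding V Aᴴ = (twistedEmbedding V A)ᵀ := by
  refine ext_rowEquiv fun x y => ?_
  rw [transpose_apply, twistedEmbedding_rowEquiv_apply, twistedEmbedding_rowEquiv_apply,
    realify_conjTranspose, extendByOne_transpose, transpose_apply]
  ring

lemma mul_conjTranspose_eq_one_of_twistedEmbedding {A : Matrix (Fin n) (Fin n) ℂ}
    (hA : twistedEmbedding V A * (twistedEmbedding V A)ᵀ = 1) : A * Aᴴ = 1 :=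
  twistedEmbedding_injective V <| by
    rw [map_mul, twistedEmbedding_conjTranspose, hA, map_one]

lemma commMat_twistedEmbedding {A B : Matrix (Fin n) (Fin n) ℂ}
    (hA : twistedEmbedding V A * (twistedEmbedding V A)ᵀ = 1)
    (hB : twistedEmbedding V B * (twistedEmbedding V B)ᵀ = 1) :
    commMat n (twistedEmbedding V A) (twistedEmbedding V B) =
      twistedEmbedding V (A * B * Aᴴ * Bᴴ) := by
  rw [commMat, inv_eq_right_inv hA, inv_eq_right_inv hB, ← twistedEmbedding_conjTranspose,
    ← twistedEmbedding_conjTranspose]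
  simp only [map_mul]

def TwistedCauchyRiemann (N : Matrix (Fin (2*n+1)) (Fin (2*n+1)) ℝ) : Prop :=
  ∀ i j : Fin n,
    N (ia i) (ib j) = -(vSign V i * vSign V j : ℤ) * N (ib i) (ia j) ∧
      N (ib i) (ib j) = (vSign V i * vSign V j : ℤ) * N (ia i) (ia j)

lemma twistedCauchyRiemann_of_blocks {N : Matrix (Fin (2*n+1)) (Fin (2*n+1)) ℝ}
    (hblock : ∀ i j : Fin n,
      ((i, j) ∉ V ×ˢ Vᶜ ∪ (V ×ˢ Vᶜ).image Prod.swap →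
        ∃ x y : ℝ, N (ia i) (ia j) = x ∧ N (ia i) (ib j) = -y ∧
          N (ib i) (ia j) = y ∧ N (ib i) (ib j) = x) ∧
      ((i, j) ∈ V ×ˢ Vᶜ ∪ (V ×ˢ Vᶜ).image Prod.swap →
        ∃ w z : ℝ, N (ia i) (ia j) = w ∧ N (ia i) (ib j) = z ∧
          N (ib i) (ia j) = z ∧ N (ib i) (ib j) = -w)) :
    TwistedCauchyRiemann V N := by
  intro i j
  rw [vSign_mul_vSign]
  split_ifs with h
  · obtain ⟨w, z, h₁, h₂, h₃, h₄⟩ := (hblock i j).2 h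
    simp [h₁, h₂, h₃, h₄]
  · obtain ⟨x, y, h₁, h₂, h₃, h₄⟩ := (hblock i j).1 h
    simp [h₁, h₂, h₃, h₄]

lemma exists_twistedEmbedding_eq {N : Matrix (Fin (2*n+1)) (Fin (2*n+1)) ℝ}
    (hlast : N (ilast n) (ilast n) = 1 ∧
      ∀ r : Fin (2*n+1), r ≠ ilast n → N r (ilast n) = 0 ∧ N (ilast n) r = 0)
    (hCR : TwistedCauchyRiemann V N) :
    ∃ A, N = twistedEmbedding V A := by
  refine ⟨Matrix.of fun i j => ⟨N (ia i) (ia j), vSign V i * N (ib i) (ia j)⟩,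
    ext_rowEquiv fun x y => ?_⟩
  rw [twistedEmbedding_rowEquiv_apply]
  rcases x with ⟨i, a⟩ | u <;> rcases y with ⟨j, b⟩ | v
  · have hsq : (vSign V i : ℝ) * vSign V i = 1 := by exact_mod_cast vSign_mul_self V i
    rw [extendByOne_inl_inl, realify_apply, Algebra.leftMulMatrix_complex]
    fin_cases a <;> fin_cases b <;> simp [twist, (hCR i j).1, (hCR i j).2, ← mul_assoc, hsq] <;> ring
  · simpa using (hlast.2 _ (rowEquiv_inl_ne_ilast _)).1
  · simpa using (hlast.2 _ (rowEquiv_inl_ne_ilast _)).2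
  · simpa [twist] using hlast.1

end TwistedEmbedding

section Torus

variable {n : ℕ} (V : Finset (Fin n)) (θ : Fin n → ℝ)

lemma torusMat_rowEquiv_inl_inl (i j : Fin n) (a b : Fin 2) :
    torusMat n θ (rowEquiv n (.inl (i, a))) (rowEquiv n (.inl (j, b))) =
      if i = j then Algebra.leftMulMatrix Complex.basisOneI
        (Complex.exp (θ i * Complex.I)) a b else 0 := by
  have hdivi : (2 * i.val + a) / 2 = i := by omega
  have hdivj : (2 * j.val + b) / 2 = j := by omega
  simp only [torusMat, of_apply, rowEquiv, Equiv.coe_fn_mk, hdivi, hdivj,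
    dif_pos (show 2 * i.val + a < 2 * n by omega), if_pos (show 2 * j.val + b < 2 * n by omega)]
  by_cases h : i = j
  · subst h
    rw [if_pos rfl, if_pos rfl, Algebra.leftMulMatrix_complex]
    fin_cases a <;> fin_cases b <;>
      simp [Complex.exp_ofReal_mul_I_re, Complex.exp_ofReal_mul_I_im]
  · rw [if_neg (fun h' => h (Fin.ext h')), if_neg h]

noncomputable def twistedTorus : Matrix (Fin n) (Fin n) ℂ :=
  diagonal fun i => Complex.exp (↑((vSign V i : ℝ) * θ i) * Complex.I)

lemma torusMat_eq_twistedEmbedding :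
    torusMat n θ = twistedEmbedding V (twistedTorus V θ) := by
  refine ext_rowEquiv fun x y => ?_
  rw [twistedEmbedding_rowEquiv_apply]
  rcases x with ⟨i, a⟩ | u <;> rcases y with ⟨j, b⟩ | v
  · rw [torusMat_rowEquiv_inl_inl, extendByOne_inl_inl, realify_apply, twistedTorus,
      diagonal_apply]
    by_cases h : i = j
    · subst h
      rw [if_pos rfl, if_pos rfl, twist_mul_leftMulMatrix_exp_mul_twist]
    · simp [h]
  all_goals simp [torusMat, rowEquiv, ilast, twist]; try omega

lemma exists_sum_eq_of_det_twistedTorus_eq_one (h : (twistedTorus V θ).det = 1) :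
    ∃ k : ℤ, ∑ i, (vSign V i : ℝ) * θ i = 2 * π * k := by
  rw [twistedTorus, det_diagonal, ← Complex.exp_sum, Complex.exp_eq_one_iff] at h
  obtain ⟨k, hk⟩ := h
  refine ⟨k, ?_⟩
  have : ((∑ i, (vSign V i : ℝ) * θ i : ℝ) : ℂ) = ((2 * π * k : ℝ) : ℂ) := by
    apply mul_right_cancel₀ Complex.I_ne_zero
    push_cast [Finset.sum_mul] at hk ⊢
    rw [hk]; ring
  exact_mod_cast this

end Torus

theorem stmt4 (n g : ℕ) (hn : 2 ≤ n)
    (V : Finset (Fin n))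
    (B : Finset (Fin n × Fin n)) (hB : B = V ×ˢ Vᶜ)
    (M : Fin (2*g) → Matrix (Fin (2*n+1)) (Fin (2*n+1)) ℝ)
    (hSO : ∀ l, SOodd n (M l))
    (hlast : ∀ l, M l (ilast n) (ilast n) = 1 ∧
      ∀ r : Fin (2*n+1), r ≠ ilast n → M l r (ilast n) = 0 ∧ M l (ilast n) r = 0)
    (hblock : ∀ l (i j : Fin n),
      ((i, j) ∉ B ∪ B.image Prod.swap →
        ∃ x y : ℝ, M l (ia i) (ia j) = x ∧ M l (ia i) (ib j) = -y ∧
          M l (ib i) (ia j) = y ∧ M l (ib i) (ib j) = x) ∧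
      ((i, j) ∈ B ∪ B.image Prod.swap →
        ∃ w z : ℝ, M l (ia i) (ia j) = w ∧ M l (ia i) (ib j) = z ∧
          M l (ib i) (ia j) = z ∧ M l (ib i) (ib j) = -w))
    (θ : Fin n → ℝ) (hgen : IsGeneric n θ) :
    ((List.finRange g).map (fun l =>
        commMat n (M ⟨2*l.val, by have := l.isLt; omega⟩)
                  (M ⟨2*l.val+1, by have := l.isLt; omega⟩))).prod
      ≠ torusMat n θ := by
  subst hB
  intro h
  choose A hA using fun l =>
    exists_twistedEmbedding_eq V (hlast l) (twistedCauchyRiemann_of_blocks V (hblock l))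
  have hOrth l : twistedEmbedding V (A l) * (twistedEmbedding V (A l))ᵀ = 1 := hA l ▸ (hSO l).1
  set C : Fin g → Matrix (Fin n) (Fin n) ℂ := fun l =>
    A ⟨2*l.val, by omega⟩ * A ⟨2*l.val+1, by omega⟩ *
      (A ⟨2*l.val, by omega⟩)ᴴ * (A ⟨2*l.val+1, by omega⟩)ᴴ
  have hprod : ((List.finRange g).map C).prod = twistedTorus V θ := by
    refine twistedEmbedding_injective V ?_
    rw [map_list_prod, List.map_map, ← torusMat_eq_twistedEmbedding, ← h]
    congr 1
    refine List.map_congr_left fun l _ => ?_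
    simp only [Function.comp_apply, C, hA, commMat_twistedEmbedding V (hOrth _) (hOrth _)]
  have hdet : (twistedTorus V θ).det = 1 := by
    rw [← hprod, ← coe_detMonoidHom, map_list_prod, List.map_map]
    refine List.prod_eq_one fun d hd => ?_
    obtain ⟨l, -, rfl⟩ := List.mem_map.mp hd
    exact det_mul_mul_mul_eq_one (mul_conjTranspose_eq_one_of_twistedEmbedding V (hOrth _))
      (mul_conjTranspose_eq_one_of_twistedEmbedding V (hOrth _))
  obtain ⟨k, hk⟩ := exists_sum_eq_of_det_twistedTorus_eq_one V θ hdet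
  refine vSign_ne_zero V ⟨0, by omega⟩ (hgen.2 (vSign V) (fun i => ?_) ⟨k, hk⟩ _)
  rcases vSign_eq_neg_one_or_one V i with h | h <;> simp [h]
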